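/- arXiv:0706.4458 — 2 statements merged into one kernel-verified Lean document; each statement's English description precedes it below -/
import Mathlib

section
/- Let T be a triangulated category with arbitrary coproducts and α an infinite regular cardinal. If G → G' is a morphism between α-small objects of T, then its cone C is α-small. -/
/-!
Let `f : T.obj₃ ⟶ ∐ X`. Smallness of `T.obj₂` factors `T.mor₂ ≫ f` through a small subcoproduct
`∐_{J₁}`, whose inclusion `ι` is a split mono; exactness of `Hom(-, ∐_{J₁})` and `Hom(-, ∐ X)` on
the triangle then gives `f = h ≫ ι + T.mor₃ ≫ k` with `k : T.obj₁⟦1⟧ ⟶ ∐ X`. As the shift is an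
equivalence, `k` factors through a small `∐_{J₂}`, so `f` factors through `∐_{J₁ ∪ J₂}`, which is
small because `α` is infinite.
-/

open CategoryTheory Limits Pretriangulated

universe v u

/-- An object `G` of a category with coproducts is `α`-small if every morphism from `G`
to a set-indexed coproduct factors through a subcoproduct indexed by a subset of
cardinality strictly smaller than `α`. -/
def IsAlphaSmall {C : Type u} [Category.{v} C] [HasCoproducts.{v} C]
    (α : Cardinal.{v}) (G : C) : Prop :=
  ∀ (I : Type v) (X : I → C) (f : G ⟶ ∐ X),
    ∃ (J : Set I) (g : G ⟶ ∐ (fun j : J => X j)),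
      Cardinal.mk J < α ∧ g ≫ Sigma.desc (fun j : J => Sigma.ι X j.1) = f

section Subcoproduct

variable {C : Type u} [Category.{v} C] [HasCoproducts.{v} C] {I : Type v} (X : I → C)

noncomputable abbrev subcoproductι (J : Set I) : (∐ fun j : J => X j) ⟶ ∐ X :=
  Sigma.desc fun j : J => Sigma.ι X j.1

noncomputable def subcoproductInclusion {J' J : Set I} (h : J' ⊆ J) :
    (∐ fun j : J' => X j) ⟶ (∐ fun j : J => X j) :=
  Sigma.desc fun j : J' => Sigma.ι (fun j : J => X j.1) ⟨j.1, h j.2⟩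

@[simp]
lemma subcoproductInclusion_comp_subcoproductι {J' J : Set I} (h : J' ⊆ J) :
    subcoproductInclusion X h ≫ subcoproductι X J = subcoproductι X J' := by
  ext j
  simp [subcoproductInclusion]

instance isSplitMono_subcoproductι [HasZeroMorphisms C] (J : Set I) :
    IsSplitMono (subcoproductι X J) := by
  classical
  exact ⟨⟨{ retraction := Sigma.desc fun i : I =>
              if h : i ∈ J then Sigma.ι (fun j : J => X j.1) ⟨i, h⟩ else 0
            id := by ext j; simp }⟩⟩

end Subcoproduct

lemma IsAlphaSmall.of_adjunction {C : Type u} [Category.{v} C] [HasCoproducts.{v} C]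
    {D : Type*} [Category.{v} D] [HasCoproducts.{v} D] {F : C ⥤ D} {R : D ⥤ C} (adj : F ⊣ R)
    [∀ I : Type v, PreservesColimitsOfShape (Discrete I) R] {α : Cardinal.{v}} {G : C}
    (hG : IsAlphaSmall α G) :
    IsAlphaSmall α (F.obj G) := by
  intro I X f
  obtain ⟨J, g, hJ, hg⟩ := hG I (fun i => R.obj (X i))
    (adj.homEquiv _ _ f ≫ inv (sigmaComparison R X))
  refine ⟨J, (adj.homEquiv _ _).symm (g ≫ sigmaComparison R fun j : J => X j), hJ, ?_⟩
  apply (adj.homEquiv _ _).injective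
  have comparison_comm : sigmaComparison R (fun j : J => X j) ≫ R.map (subcoproductι X J) =
      subcoproductι (fun i => R.obj (X i)) J ≫ sigmaComparison R X := by
    ext j
    simp
  rw [Adjunction.homEquiv_naturality_right, Equiv.apply_symm_apply, Category.assoc,
    comparison_comm, ← Category.assoc, hg, Category.assoc, IsIso.inv_hom_id, Category.comp_id]

lemma IsAlphaSmall.shift {C : Type u} [Category.{v} C] [HasCoproducts.{v} C] [HasShift C ℤ]
    {α : Cardinal.{v}} {G : C} (hG : IsAlphaSmall α G) (n : ℤ) : IsAlphaSmall α (G⟦n⟧) :=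
  hG.of_adjunction (shiftEquiv C n).toAdjunction

lemma CategoryTheory.Pretriangulated.Triangle.exists_comp_add_mor₃_comp_eq {C : Type*}
    [Category C] [Preadditive C] [HasZeroObject C] [HasShift C ℤ]
    [∀ n : ℤ, (CategoryTheory.shiftFunctor C n).Additive] [Pretriangulated C]
    {T : Triangle C} (hT : T ∈ distTriang C) {A Y : C} {m : A ⟶ Y} [Mono m]
    {f : T.obj₃ ⟶ Y} {g : T.obj₂ ⟶ A} (hfg : T.mor₂ ≫ f = g ≫ m) :
    ∃ (h : T.obj₃ ⟶ A) (k : T.obj₁⟦(1 : ℤ)⟧ ⟶ Y), h ≫ m + T.mor₃ ≫ k = f := by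
  have hg : T.mor₁ ≫ g = 0 := by
    rw [← cancel_mono m, Category.assoc, ← hfg, ← Category.assoc, comp_distTriang_mor_zero₁₂ T hT,
      zero_comp, zero_comp]
  obtain ⟨h, rfl⟩ := yoneda_exact₂ T hT g hg
  have hf : T.mor₂ ≫ (f - h ≫ m) = 0 := by
    rw [Preadditive.comp_sub, hfg, Category.assoc, sub_self]
  obtain ⟨k, hk⟩ := yoneda_exact₃ T hT _ hf
  exact ⟨h, k, by rw [← hk, add_sub_cancel]⟩

/-- In a triangulated category with arbitrary coproducts, the cone of a morphism between
`α`-small objects is `α`-small, for `α` an infinite regular cardinal: in any distinguished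
triangle `G ⟶ G' ⟶ C ⟶ ΣG` with `G`, `G'` `α`-small, the object `C` is `α`-small. -/
theorem isAlphaSmall_cone {C : Type u} [Category.{v} C] [HasCoproducts.{v} C]
    [Preadditive C] [HasZeroObject C] [HasShift C ℤ]
    [∀ n : ℤ, (shiftFunctor C n).Additive] [Pretriangulated C]
    (α : Cardinal.{v}) (hα : α.IsRegular) (hα' : Cardinal.aleph0 ≤ α)
    (T : Triangle C) (hT : T ∈ distTriang C)
    (h₁ : IsAlphaSmall α T.obj₁) (h₂ : IsAlphaSmall α T.obj₂) :
    IsAlphaSmall α T.obj₃ := by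
  intro I X f
  obtain ⟨J₁, g, hJ₁, hg⟩ := h₂ I X (T.mor₂ ≫ f)
  obtain ⟨h, k, rfl⟩ := Triangle.exists_comp_add_mor₃_comp_eq hT hg.symm
  obtain ⟨J₂, k', hJ₂, rfl⟩ := h₁.shift 1 I X k
  refine ⟨J₁ ∪ J₂, h ≫ subcoproductInclusion X Set.subset_union_left +
    T.mor₃ ≫ k' ≫ subcoproductInclusion X Set.subset_union_right, ?_, ?_⟩
  · exact (Cardinal.mk_union_le J₁ J₂).trans_lt (Cardinal.add_lt_of_lt hα' hJ₁ hJ₂)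
  · simp only [Preadditive.add_comp, Category.assoc, subcoproductInclusion_comp_subcoproductι]
end

section
/- Let T be a triangulated category with arbitrary coproducts, G a small full subcategory, and Add(G) its closure under arbitrary coproducts and direct factors. Then for each object X of T, the restricted functor T(−,X)|_{Add(G)} is a coherent functor on Add(G), i.e. it admits a presentation by representable functors. -/
/-!
The subcategory `Add 𝒢₀` is contravariantly finite: the coproduct of all morphisms from
objects of `𝒢₀` to `X` is a right `Add 𝒢₀`-approximation `G₀ ⟶ X`, since every object of
`Add 𝒢₀` is built from `𝒢₀` by coproducts and retracts. Complete it to a distinguished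
triangle `Y ⟶ G₀ ⟶ X ⟶ Y⟦1⟧` and approximate `Y` by `G₁ ⟶ Y`; as `Hom(A, −)` is
homological, `Hom(−, G₁) ⟶ Hom(−, G₀) ⟶ Hom(−, X) ⟶ 0` is exact on `Add 𝒢₀`.
-/

open CategoryTheory Limits Pretriangulated

universe v u

variable {C : Type u} [Category.{v} C]

/-- `Add 𝒢₀`: the closure of a class of objects under arbitrary set-indexed coproducts and
direct factors. -/
inductive AddClosure [HasCoproducts.{v} C] (S : Set C) : C → Prop
  | base (X : C) : X ∈ S → AddClosure S X
  | coprod (I : Type v) (X : I → C) : (∀ i, AddClosure S (X i)) → AddClosure S (∐ X)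
  | retract (X Y : C) (p : X ⟶ Y) (i : Y ⟶ X) : i ≫ p = 𝟙 Y →
      AddClosure S X → AddClosure S Y

/-- The restriction of the additive Hom functor `Hom(−,X)` to the full subcategory of
objects in `P`. -/
def restrictedHom [Preadditive C] (P : Set C) (X : C) :
    (ObjectProperty.FullSubcategory (· ∈ P))ᵒᵖ ⥤ AddCommGrpCat.{v} :=
  (ObjectProperty.ι (· ∈ P)).op ⋙ preadditiveYoneda.obj X

/-- A functor `F` on the full subcategory of objects of `P` is coherent if it admits a
presentation `Hom(−,G₁) ⟶ Hom(−,G₀) ⟶ F ⟶ 0` by representable functors with `G₁, G₀ ∈ P`,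
i.e. an exact sequence of functors to abelian groups. -/
def IsCoherent [Preadditive C] (P : Set C)
    (F : (ObjectProperty.FullSubcategory (· ∈ P))ᵒᵖ ⥤ AddCommGrpCat.{v}) : Prop :=
  ∃ (G₁ G₀ : ObjectProperty.FullSubcategory (· ∈ P))
    (p : restrictedHom P G₁.obj ⟶ restrictedHom P G₀.obj)
    (q : restrictedHom P G₀.obj ⟶ F),
    (∀ A, Function.Surjective (q.app A)) ∧
    (∀ A (y : (restrictedHom P G₀.obj).obj A), q.app A y = 0 ↔ ∃ x, p.app A x = y)

/-- Equivalently, `π` induces an epimorphism `restrictedHom P G ⟶ restrictedHom P X`. -/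
def IsRightApproximation (P : Set C) {G X : C} (π : G ⟶ X) : Prop :=
  G ∈ P ∧ ∀ A ∈ P, ∀ f : A ⟶ X, ∃ g : A ⟶ G, g ≫ π = f

lemma AddClosure.exists_lift [HasCoproducts.{v} C] {S : Set C} {G X : C} (π : G ⟶ X)
    (hS : ∀ A ∈ S, ∀ f : A ⟶ X, ∃ g : A ⟶ G, g ≫ π = f) {A : C} (hA : AddClosure S A)
    (f : A ⟶ X) : ∃ g : A ⟶ G, g ≫ π = f := by
  induction hA with
  | base A hA => exact hS A hA f
  | coprod I Y _ ih =>
    choose g hg using fun i => ih i (Sigma.ι Y i ≫ f)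
    exact ⟨Sigma.desc g, by ext i; simp [hg i]⟩
  | retract B A p i hip _ ih =>
    obtain ⟨g, hg⟩ := ih (p ≫ f)
    exact ⟨i ≫ g, by rw [Category.assoc, hg, ← Category.assoc, hip, Category.id_comp]⟩

/-- The canonical morphism `∐ A ⟶ X`, indexed by all pairs of `A ∈ 𝒢₀` and `f : A ⟶ X`. -/
lemma exists_isRightApproximation_addClosure [HasCoproducts.{v} C]
    (𝒢₀ : Set C) [Small.{v} 𝒢₀] (X : C) :
    ∃ (G : C) (π : G ⟶ X), IsRightApproximation (Set.ofPred (AddClosure 𝒢₀)) π := by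
  let D : (Σ A : Shrink.{v} 𝒢₀, (((equivShrink 𝒢₀).symm A : 𝒢₀) : C) ⟶ X) → C :=
    fun i => ((equivShrink 𝒢₀).symm i.1 : 𝒢₀)
  refine ⟨∐ D, Sigma.desc Sigma.snd,
    AddClosure.coprod _ _ fun i => AddClosure.base _ ((equivShrink 𝒢₀).symm i.1).2,
    fun A hA => AddClosure.exists_lift _ (fun A hA f => ?_) hA⟩
  have hD : A = D ⟨equivShrink 𝒢₀ ⟨A, hA⟩, eqToHom (by simp) ≫ f⟩ := by simp [D]
  exact ⟨eqToHom hD ≫ Sigma.ι D _, by simp⟩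

lemma isCoherent_restrictedHom_of_exact [Preadditive C] {P : Set C} {G₁ G₀ X : C}
    (d : G₁ ⟶ G₀) (π : G₀ ⟶ X) (hG₁ : G₁ ∈ P) (hπ : IsRightApproximation P π)
    (hdπ : d ≫ π = 0)
    (hexact : ∀ A ∈ P, ∀ y : A ⟶ G₀, y ≫ π = 0 → ∃ x : A ⟶ G₁, x ≫ d = y) :
    IsCoherent P (restrictedHom P X) := by
  refine ⟨⟨G₁, hG₁⟩, ⟨G₀, hπ.1⟩,
    Functor.whiskerLeft (ObjectProperty.ι (· ∈ P)).op (preadditiveYoneda.map d),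
    Functor.whiskerLeft (ObjectProperty.ι (· ∈ P)).op (preadditiveYoneda.map π),
    fun A => hπ.2 _ A.unop.2, fun A y => ⟨hexact _ A.unop.2 y, ?_⟩⟩
  rintro ⟨x, rfl⟩
  exact (Category.assoc _ _ _).trans (by rw [hdπ]; exact comp_zero)

/-- The presentation is `π₁ ≫ T.mor₁ : G₁ ⟶ T.obj₂` followed by `T.mor₂`; its exactness is
that of `Hom(A, −)` on the triangle. -/
lemma isCoherent_restrictedHom_of_distTriang [Preadditive C] [HasZeroObject C]
    [HasShift C ℤ] [∀ n : ℤ, (shiftFunctor C n).Additive] [Pretriangulated C]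
    {P : Set C} (T : Triangle C) (hT : T ∈ distTriang C) {G₁ : C} {π₁ : G₁ ⟶ T.obj₁}
    (hπ₁ : IsRightApproximation P π₁) (hπ₀ : IsRightApproximation P T.mor₂) :
    IsCoherent P (restrictedHom P T.obj₃) := by
  refine isCoherent_restrictedHom_of_exact (π₁ ≫ T.mor₁) T.mor₂ hπ₁.1 hπ₀
    (by rw [Category.assoc, comp_distTriang_mor_zero₁₂ _ hT, comp_zero]) fun A hA y hy => ?_
  obtain ⟨g, rfl⟩ := Triangle.coyoneda_exact₂ _ hT y hy
  obtain ⟨x, rfl⟩ := hπ₁.2 A hA g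
  exact ⟨x, (Category.assoc _ _ _).symm⟩

/-- For every object `X` of a triangulated category `T` with arbitrary coproducts and every
small full subcategory `𝒢₀`, the restriction of `Hom(−,X)` to `Add 𝒢₀` is a coherent
functor. -/
theorem restrictedHom_isCoherent [HasCoproducts.{v} C]
    [Preadditive C] [HasZeroObject C] [HasShift C ℤ]
    [∀ n : ℤ, (shiftFunctor C n).Additive] [Pretriangulated C]
    (𝒢₀ : Set C) (hsmall : Small.{v} 𝒢₀) (X : C) :
    IsCoherent (setOf (AddClosure 𝒢₀)) (restrictedHom (setOf (AddClosure 𝒢₀)) X) := by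
  obtain ⟨G₀, π₀, hπ₀⟩ := exists_isRightApproximation_addClosure 𝒢₀ X
  obtain ⟨Y, _, _, hT⟩ := distinguished_cocone_triangle₁ π₀
  obtain ⟨G₁, π₁, hπ₁⟩ := exists_isRightApproximation_addClosure 𝒢₀ Y
  exact isCoherent_restrictedHom_of_distTriang _ hT hπ₁ hπ₀
end
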